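/- arXiv:1006.0468 — 4 statements merged into one kernel-verified Lean document; each statement's English description precedes it below -/
import Mathlib

section
/- Let X be a random variable taking values in the set {(+1,+1,+1), (+1,−1,−1), (−1,+1,−1), (−1,−1,+1)} with probabilities q0, q1, q2, q3. If each q_i ≤ x for some x ∈ [1/2, 1), then the Shannon entropy H(X) ≥ h(x), where h is the binary entropy function h(t) = −t log₂ t − (1−t) log₂(1−t). -/
open Real

/-- Subadditivity of `negMulLog` on nonnegative reals. -/
lemma negMulLog_add_le' {a b : ℝ} (ha : 0 ≤ a) (hb : 0 ≤ b) :
    Real.negMulLog (a + b) ≤ Real.negMulLog a + Real.negMulLog b := by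
  rcases ha.eq_or_lt with h | ha'
  · simp [← h]
  rcases hb.eq_or_lt with h | hb'
  · simp [← h]
  have h1 : Real.log a ≤ Real.log (a + b) := Real.log_le_log ha' (by linarith)
  have h2 : Real.log b ≤ Real.log (a + b) := Real.log_le_log hb' (by linarith)
  simp only [Real.negMulLog]
  nlinarith

/-- Linear lower bound: for `0 ≤ t ≤ m`, `negMulLog t ≥ -t * log m`. -/
lemma negMulLog_ge_linear {t m : ℝ} (ht : 0 ≤ t) (htm : t ≤ m) :
    -t * Real.log m ≤ Real.negMulLog t := by
  rcases ht.eq_or_lt with h | ht'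
  · simp [← h]
  have : Real.log t ≤ Real.log m := Real.log_le_log ht' htm
  simp only [Real.negMulLog]
  nlinarith

lemma binEntropy_anti {a x : ℝ} (hx1 : 1/2 ≤ x) (hx2 : x < 1)
    (ha1 : 1 - x ≤ a) (ha2 : a ≤ x) :
    Real.binEntropy x ≤ Real.binEntropy a := by
  have h2 : (2:ℝ)⁻¹ = 1/2 := by norm_num
  rcases le_total (1/2 : ℝ) a with h | h
  · exact Real.binEntropy_strictAntiOn.antitoneOn
      ⟨by linarith, by linarith⟩ ⟨by linarith, by linarith⟩ ha2
  · rw [← Real.binEntropy_one_sub a]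
    exact Real.binEntropy_strictAntiOn.antitoneOn
      ⟨by linarith, by linarith⟩ ⟨by linarith, by linarith⟩ (by linarith)

/-- Natural-log version, assuming `a` is the maximum. -/
lemma aux_max (a b c d x : ℝ) (ha : 0 ≤ a) (hb : 0 ≤ b) (hc : 0 ≤ c) (hd : 0 ≤ d)
    (hsum : a + b + c + d = 1)
    (hx1 : 1/2 ≤ x) (hx2 : x < 1) (hax : a ≤ x)
    (hba : b ≤ a) (hca : c ≤ a) (hda : d ≤ a) :
    Real.binEntropy x ≤
      Real.negMulLog a + Real.negMulLog b + Real.negMulLog c + Real.negMulLog d := by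
  have hx0 : 0 < x := by linarith
  have h1x : 0 < 1 - x := by linarith
  rcases le_total a (1 - x) with hcase | hcase
  · -- all probabilities ≤ 1 - x; entropy ≥ -log(1-x) ≥ binEntropy x
    have l0 := negMulLog_ge_linear ha (le_trans hax le_rfl)
    have g0 : -a * Real.log (1 - x) ≤ Real.negMulLog a :=
      negMulLog_ge_linear ha hcase
    have g1 : -b * Real.log (1 - x) ≤ Real.negMulLog b :=
      negMulLog_ge_linear hb (by linarith)
    have g2 : -c * Real.log (1 - x) ≤ Real.negMulLog c :=
      negMulLog_ge_linear hc (by linarith)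
    have g3 : -d * Real.log (1 - x) ≤ Real.negMulLog d :=
      negMulLog_ge_linear hd (by linarith)
    have hlog : Real.log (1 - x) ≤ Real.log x := Real.log_le_log h1x (by linarith)
    have hbe : Real.binEntropy x ≤ -Real.log (1 - x) := by
      rw [Real.binEntropy_eq_negMulLog_add_negMulLog_one_sub]
      simp only [Real.negMulLog]
      nlinarith
    have hsumL : -a * Real.log (1 - x) + -b * Real.log (1 - x) + -c * Real.log (1 - x)
        + -d * Real.log (1 - x) = -Real.log (1 - x) := by
      linear_combination (-(Real.log (1 - x))) * hsum
    linarith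
  · -- a ≥ 1 - x : collapse b,c,d and use antitonicity of binEntropy
    have s1 : Real.negMulLog (b + c) ≤ Real.negMulLog b + Real.negMulLog c :=
      negMulLog_add_le' hb hc
    have s2 : Real.negMulLog (b + c + d) ≤ Real.negMulLog (b + c) + Real.negMulLog d :=
      negMulLog_add_le' (by linarith) hd
    have hbcd : b + c + d = 1 - a := by linarith
    have hmono : Real.binEntropy x ≤ Real.binEntropy a :=
      binEntropy_anti hx1 hx2 hcase hax
    have : Real.binEntropy a = Real.negMulLog a + Real.negMulLog (1 - a) :=
      Real.binEntropy_eq_negMulLog_add_negMulLog_one_sub a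
    rw [hbcd] at s2
    linarith

/-- Natural-log version without a max hypothesis. -/
lemma aux_any (a b c d x : ℝ) (ha : 0 ≤ a) (hb : 0 ≤ b) (hc : 0 ≤ c) (hd : 0 ≤ d)
    (hsum : a + b + c + d = 1)
    (hx1 : 1/2 ≤ x) (hx2 : x < 1)
    (hax : a ≤ x) (hbx : b ≤ x) (hcx : c ≤ x) (hdx : d ≤ x) :
    Real.binEntropy x ≤
      Real.negMulLog a + Real.negMulLog b + Real.negMulLog c + Real.negMulLog d := by
  rcases le_total b a with hab | hab <;> rcases le_total d c with hcd | hcd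
  · rcases le_total c a with h | h
    · linarith [aux_max a b c d x ha hb hc hd (by linarith) hx1 hx2 hax hab h (by linarith)]
    · linarith [aux_max c d a b x hc hd ha hb (by linarith) hx1 hx2 hcx hcd
        (by linarith) (by linarith)]
  · rcases le_total d a with h | h
    · linarith [aux_max a b c d x ha hb hc hd (by linarith) hx1 hx2 hax hab
        (by linarith) h]
    · linarith [aux_max d c a b x hd hc ha hb (by linarith) hx1 hx2 hdx hcd
        (by linarith) (by linarith)]
  · rcases le_total c b with h | h
    · linarith [aux_max b a c d x hb ha hc hd (by linarith) hx1 hx2 hbx hab h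
        (by linarith)]
    · linarith [aux_max c d b a x hc hd hb ha (by linarith) hx1 hx2 hcx hcd h
        (by linarith)]
  · rcases le_total d b with h | h
    · linarith [aux_max b a c d x hb ha hc hd (by linarith) hx1 hx2 hbx hab
        (by linarith) h]
    · linarith [aux_max d c b a x hd hc hb ha (by linarith) hx1 hx2 hdx hcd
        (by linarith) (by linarith)]

/-- Shannon entropy (base 2) of a distribution supported on four outcomes,
with the capped probabilities implying `H ≥ h(x)` (binary entropy). -/
theorem entropy_lower_bound_of_capped (q0 q1 q2 q3 x : ℝ)
    (hq0 : 0 ≤ q0) (hq1 : 0 ≤ q1) (hq2 : 0 ≤ q2) (hq3 : 0 ≤ q3)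
    (hsum : q0 + q1 + q2 + q3 = 1)
    (hx : x ∈ Set.Ico (1/2 : ℝ) 1)
    (hb0 : q0 ≤ x) (hb1 : q1 ≤ x) (hb2 : q2 ≤ x) (hb3 : q3 ≤ x) :
    -(q0 * Real.logb 2 q0) - q1 * Real.logb 2 q1 - q2 * Real.logb 2 q2
        - q3 * Real.logb 2 q3
      ≥ -(x * Real.logb 2 x) - (1 - x) * Real.logb 2 (1 - x) := by
  obtain ⟨hx1, hx2⟩ := hx
  have key := aux_any q0 q1 q2 q3 x hq0 hq1 hq2 hq3 hsum hx1 hx2 hb0 hb1 hb2 hb3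
  have h2 : (0 : ℝ) < Real.log 2 := Real.log_pos one_lt_two
  rw [ge_iff_le]
  have eL : -(q0 * Real.logb 2 q0) - q1 * Real.logb 2 q1 - q2 * Real.logb 2 q2
      - q3 * Real.logb 2 q3
      = (Real.negMulLog q0 + Real.negMulLog q1 + Real.negMulLog q2
          + Real.negMulLog q3) / Real.log 2 := by
    simp only [Real.logb, Real.negMulLog]
    field_simp
    ring
  have eR : -(x * Real.logb 2 x) - (1 - x) * Real.logb 2 (1 - x)
      = Real.binEntropy x / Real.log 2 := by
    rw [Real.binEntropy_eq_negMulLog_add_negMulLog_one_sub]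
    simp only [Real.logb, Real.negMulLog]
    field_simp
    ring
  rw [eL, eR]
  gcongr
end

section
/- Among all probability distributions (q0, q1, q2, q3) on four outcomes satisfying q_i ≤ x for all i with x ∈ [1/2, 1), the distribution minimizing Shannon entropy is (x, 1−x, 0, 0) (up to permutation), and the minimum entropy equals h(x). -/
open Real Finset

private lemma ent_eq (t : ℝ) :
    -(t * Real.logb 2 t) - (1 - t) * Real.logb 2 (1 - t) = Real.binEntropy t / Real.log 2 := by
  simp [Real.binEntropy, Real.logb, Real.log_inv]
  ring

private lemma f_subadd {a b : ℝ} (ha : 0 ≤ a) (hb : 0 ≤ b) :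
    -((a + b) * Real.logb 2 (a + b)) ≤ -(a * Real.logb 2 a) + -(b * Real.logb 2 b) := by
  have key : ∀ c d : ℝ, 0 ≤ c → 0 ≤ d → c * Real.logb 2 c ≤ c * Real.logb 2 (c + d) := by
    intro c d hc hd
    rcases eq_or_lt_of_le hc with h | h
    · simp [← h]
    · exact mul_le_mul_of_nonneg_left
        ((Real.logb_le_logb one_lt_two h (by linarith)).mpr (by linarith)) hc
  have h1 := key a b ha hb
  have h2 := key b a hb ha
  rw [add_comm b a] at h2
  nlinarith

private lemma f_subadd_sum {n : ℕ} (s : Finset (Fin n)) (q : Fin n → ℝ)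
    (hq : ∀ i, 0 ≤ q i) :
    -((∑ i ∈ s, q i) * Real.logb 2 (∑ i ∈ s, q i)) ≤
      ∑ i ∈ s, -(q i * Real.logb 2 (q i)) := by
  induction s using Finset.cons_induction with
  | empty => simp
  | cons a s ha ih =>
    rw [Finset.sum_cons, Finset.sum_cons]
    calc -((q a + ∑ i ∈ s, q i) * Real.logb 2 (q a + ∑ i ∈ s, q i))
        ≤ -(q a * Real.logb 2 (q a)) + -((∑ i ∈ s, q i) * Real.logb 2 (∑ i ∈ s, q i)) :=
          f_subadd (hq a) (Finset.sum_nonneg fun i _ => hq i)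
      _ ≤ _ := by linarith

/-- Among all distributions on four outcomes with each probability at most `x`
(`1/2 ≤ x < 1`), the minimal Shannon entropy is `h(x)`, attained (up to
permutation) by the distribution `(x, 1-x, 0, 0)`. -/
theorem min_entropy_of_capped_distributions (x : ℝ) (hx : x ∈ Set.Ico (1/2 : ℝ) 1) :
    IsLeast
      {H : ℝ | ∃ q : Fin 4 → ℝ, (∀ i, 0 ≤ q i) ∧ (∑ i, q i) = 1 ∧ (∀ i, q i ≤ x) ∧
        H = ∑ i, -(q i * Real.logb 2 (q i))}
      (-(x * Real.logb 2 x) - (1 - x) * Real.logb 2 (1 - x)) ∧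
    (-(x * Real.logb 2 x) - (1 - x) * Real.logb 2 (1 - x)
        = ∑ i, -((![x, 1 - x, 0, 0] : Fin 4 → ℝ) i
            * Real.logb 2 ((![x, 1 - x, 0, 0] : Fin 4 → ℝ) i))) := by
  obtain ⟨hx2, hx1⟩ := hx
  have hlog2 : (0:ℝ) < Real.log 2 := Real.log_pos one_lt_two
  have heq : -(x * Real.logb 2 x) - (1 - x) * Real.logb 2 (1 - x)
      = ∑ i, -((![x, 1 - x, 0, 0] : Fin 4 → ℝ) i
          * Real.logb 2 ((![x, 1 - x, 0, 0] : Fin 4 → ℝ) i)) := by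
    rw [Fin.sum_univ_four]
    simp
    ring
  refine ⟨⟨⟨![x, 1 - x, 0, 0], ?_, ?_, ?_, heq⟩, ?_⟩, heq⟩
  · intro i; fin_cases i <;> simp <;> linarith
  · rw [Fin.sum_univ_four]; simp
  · intro i; fin_cases i <;> simp <;> linarith
  · rintro H ⟨q, hq0, hqs, hqx, rfl⟩
    -- pick the index of the maximum
    obtain ⟨i0, -, hi0⟩ := Finset.exists_max_image Finset.univ q ⟨0, Finset.mem_univ 0⟩
    have hxIcc : x ∈ Set.Icc (2⁻¹ : ℝ) 1 := ⟨by linarith, le_of_lt hx1⟩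
    by_cases hm : q i0 ≤ 1/2
    · -- all entries ≤ 1/2, entropy at least 1 ≥ h(x)
      have h1 : ∀ i, q i ≤ -(q i * Real.logb 2 (q i)) := by
        intro i
        rcases eq_or_lt_of_le (hq0 i) with h | h
        · simp [← h]
        · have : Real.logb 2 (q i) ≤ Real.logb 2 (1/2) :=
            (Real.logb_le_logb one_lt_two h (by norm_num)).mpr (le_trans (hi0 i (Finset.mem_univ i)) hm)
          have h12 : Real.logb 2 (1/2 : ℝ) = -1 := by
            rw [show (1/2 : ℝ) = 2⁻¹ by norm_num, Real.logb_inv]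
            simp
          nlinarith
      have hsum : (1:ℝ) ≤ ∑ i, -(q i * Real.logb 2 (q i)) := by
        rw [← hqs]; exact Finset.sum_le_sum fun i _ => h1 i
      have hle1 : -(x * Real.logb 2 x) - (1 - x) * Real.logb 2 (1 - x) ≤ 1 := by
        rw [ent_eq]
        rw [div_le_one hlog2]
        exact Real.binEntropy_le_log_two
      linarith
    · push_neg at hm
      have hmx : q i0 ≤ x := hqx i0
      have hrest : ∑ i ∈ Finset.univ.erase i0, q i = 1 - q i0 := by
        have := Finset.add_sum_erase Finset.univ q (Finset.mem_univ i0)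
        linarith [hqs ▸ this]
      have hsplit : ∑ i, -(q i * Real.logb 2 (q i))
          = -(q i0 * Real.logb 2 (q i0))
            + ∑ i ∈ Finset.univ.erase i0, -(q i * Real.logb 2 (q i)) :=
        (Finset.add_sum_erase Finset.univ _ (Finset.mem_univ i0)).symm
      have hsub := f_subadd_sum (Finset.univ.erase i0) q hq0
      rw [hrest] at hsub
      have hanti : Real.binEntropy x ≤ Real.binEntropy (q i0) :=
        (Real.binEntropy_strictAntiOn.antitoneOn
          ⟨by norm_num; linarith, hmx.trans hx1.le⟩ hxIcc hmx)
      have h2 : -(x * Real.logb 2 x) - (1 - x) * Real.logb 2 (1 - x)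
          ≤ -(q i0 * Real.logb 2 (q i0)) - (1 - q i0) * Real.logb 2 (1 - q i0) := by
        rw [ent_eq, ent_eq]
        exact div_le_div_of_nonneg_right hanti hlog2.le |>.trans_eq rfl
      rw [hsplit]
      nlinarith [hsub]
end

section
/- For bounded self-adjoint operators A, A', B, B' on a Hilbert space with A² = A'² = B² = B'² = I, [A,B] = [A,B'] = [A',B] = [A',B'] = 0, and any unit vector ψ, the CHSH expectation ⟨ψ|(AB + AB' + A'B − A'B')|ψ⟩ ≤ 2√2. -/
open scoped InnerProductSpace
open Real

lemma sos_id {R : Type*} [Ring R] [Algebra ℂ R] (a a' b b' : R)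
    (ha : a * a = 1) (ha' : a' * a' = 1) (hb : b * b = 1) (hb' : b' * b' = 1)
    (h1 : a * b = b * a) (h2 : a * b' = b' * a) (h3 : a' * b = b * a') (h4 : a' * b' = b' * a') :
    (((√2)⁻¹ : ℝ) : ℂ) • ((((((√2)⁻¹ : ℝ) : ℂ) • (a' + a) - b) * ((((√2)⁻¹ : ℝ) : ℂ) • (a' + a) - b))
      + (((((√2)⁻¹ : ℝ) : ℂ) • (a' - a) + b') * ((((√2)⁻¹ : ℝ) : ℂ) • (a' - a) + b')))
    = (((2 * √2 : ℝ)) : ℂ) • 1 - (a * b + a * b' + a' * b - a' * b') := by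
  have hs : ((((√2)⁻¹ : ℝ) : ℂ)) * ((((√2)⁻¹ : ℝ) : ℂ)) = ((2⁻¹ : ℝ) : ℂ) := by
    rw [← Complex.ofReal_mul, ← mul_inv, Real.mul_self_sqrt (by norm_num)]
  simp only [sub_mul, mul_sub, add_mul, mul_add, smul_add, smul_sub]
  simp only [Algebra.mul_smul_comm, Algebra.smul_mul_assoc, ← mul_smul, hs]
  simp only [ha, ha', hb, hb', h1, h2, h3, h4]
  have h2' : ((√2 : ℝ) : ℂ) * ((√2 : ℝ) : ℂ) = 2 := by
    rw [← Complex.ofReal_mul, Real.mul_self_sqrt (by norm_num)]; norm_num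
  match_scalars <;> push_cast <;> field_simp
  · linear_combination (-4:ℂ)*h2'
  · norm_num
  · norm_num
  · norm_num
  · norm_num
  · norm_num
  · norm_num

/-- Tsirelson's bound. -/
theorem tsirelson_bound {H : Type*} [NormedAddCommGroup H] [InnerProductSpace ℂ H]
    [CompleteSpace H]
    (A A' B B' : H →L[ℂ] H)
    (hA : IsSelfAdjoint A) (hA' : IsSelfAdjoint A')
    (hB : IsSelfAdjoint B) (hB' : IsSelfAdjoint B')
    (hA2 : A * A = 1) (hA'2 : A' * A' = 1) (hB2 : B * B = 1) (hB'2 : B' * B' = 1)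
    (hc1 : Commute A B) (hc2 : Commute A B') (hc3 : Commute A' B) (hc4 : Commute A' B')
    (ψ : H) (hψ : ‖ψ‖ = 1) :
    (⟪ψ, (A * B + A * B' + A' * B - A' * B') ψ⟫_ℂ).re ≤ 2 * Real.sqrt 2 := by
  set s : ℂ := (((√2)⁻¹ : ℝ) : ℂ) with hsdef
  have hss : star s = s := Complex.conj_ofReal _
  set P : H →L[ℂ] H := s • (A' + A) - B with hPdef
  set Q : H →L[ℂ] H := s • (A' - A) + B' with hQdef
  have key := sos_id A A' B B' hA2 hA'2 hB2 hB'2 hc1.eq hc2.eq hc3.eq hc4.eq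
  have hC : A * B + A * B' + A' * B - A' * B'
      = (((2 * √2 : ℝ)) : ℂ) • 1 - s • (P * P + Q * Q) := by
    rw [hPdef, hQdef, hsdef, key]
    abel
  have hP : IsSelfAdjoint P := (IsSelfAdjoint.smul hss (hA'.add hA)).sub hB
  have hQ : IsSelfAdjoint Q := (IsSelfAdjoint.smul hss (hA'.sub hA)).add hB'
  have innerP : (⟪ψ, (P * P) ψ⟫_ℂ).re = ‖P ψ‖ ^ 2 := by
    have : (P * P) ψ = P (P ψ) := rfl
    rw [this, ← hP.adjoint_eq, ContinuousLinearMap.adjoint_inner_right, hP.adjoint_eq]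
    simpa using inner_self_eq_norm_sq (𝕜 := ℂ) (P ψ)
  have innerQ : (⟪ψ, (Q * Q) ψ⟫_ℂ).re = ‖Q ψ‖ ^ 2 := by
    have : (Q * Q) ψ = Q (Q ψ) := rfl
    rw [this, ← hQ.adjoint_eq, ContinuousLinearMap.adjoint_inner_right, hQ.adjoint_eq]
    simpa using inner_self_eq_norm_sq (𝕜 := ℂ) (Q ψ)
  have expand : (⟪ψ, (A * B + A * B' + A' * B - A' * B') ψ⟫_ℂ).re
      = 2 * √2 - (√2)⁻¹ * ((⟪ψ, (P * P) ψ⟫_ℂ).re + (⟪ψ, (Q * Q) ψ⟫_ℂ).re) := by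
    rw [hC]
    simp only [ContinuousLinearMap.sub_apply, ContinuousLinearMap.smul_apply,
      ContinuousLinearMap.one_apply, ContinuousLinearMap.add_apply,
      inner_sub_right, inner_smul_right, inner_add_right]
    rw [inner_self_eq_norm_sq_to_K, hψ]
    simp only [hsdef, Complex.sub_re, Complex.add_re, Complex.re_ofReal_mul]
    push_cast
    norm_num
  rw [expand]
  have h1 : 0 ≤ (√2)⁻¹ := by positivity
  nlinarith [sq_nonneg ‖P ψ‖, sq_nonneg ‖Q ψ‖, innerP, innerQ,
    mul_nonneg h1 (add_nonneg (innerP ▸ sq_nonneg ‖P ψ‖) (innerQ ▸ sq_nonneg ‖Q ψ‖))]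
end

section
/- For any local hidden variable model, i.e., any joint probability distribution over deterministic assignments of ±1 values to A_1, A_2, A_3, B_1, B_2, B_1', B_2' (with B_3 := B_1B_2 and B_3' := B_1'B_2'), the Bell quantity γ = E[A_1B_1] + E[A_2B_2] + E[A_3B_3] + E[A_1B_1'] + E[A_2B_2'] − E[A_3B_3'] satisfies γ ≤ 4. -/
open MeasureTheory

lemma bell_integrable {Ω : Type*} [MeasurableSpace Ω] (μ : Measure Ω)
    [IsProbabilityMeasure μ] (f : Ω → ℝ) (hm : Measurable f)
    (hb : ∀ ω, |f ω| ≤ 1) : Integrable f μ :=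
  (integrable_const (1 : ℝ)).mono' hm.aestronglyMeasurable
    (Filter.Eventually.of_forall hb)

lemma bell_pt (a b c d e f g : ℝ)
    (ha : a = 1 ∨ a = -1) (hb : b = 1 ∨ b = -1) (hc : c = 1 ∨ c = -1)
    (hd : d = 1 ∨ d = -1) (he : e = 1 ∨ e = -1) (hf : f = 1 ∨ f = -1)
    (hg : g = 1 ∨ g = -1) :
    a * d + b * e + c * (d * e) + a * f + b * g - c * (f * g) ≤ 4 := by
  rcases ha with rfl | rfl <;> rcases hb with rfl | rfl <;>
    rcases hc with rfl | rfl <;> rcases hd with rfl | rfl <;>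
    rcases he with rfl | rfl <;> rcases hf with rfl | rfl <;>
    rcases hg with rfl | rfl <;> norm_num

/-- Local hidden variable bound for the Bell inequality (2): any joint
distribution over deterministic ±1 assignments gives `γ ≤ 4`. -/
theorem lhv_bell_gamma_le_four {Ω : Type*} [MeasurableSpace Ω]
    (μ : Measure Ω) [IsProbabilityMeasure μ]
    (A₁ A₂ A₃ B₁ B₂ B₁' B₂' : Ω → ℝ)
    (hmA₁ : Measurable A₁) (hmA₂ : Measurable A₂) (hmA₃ : Measurable A₃)
    (hmB₁ : Measurable B₁) (hmB₂ : Measurable B₂)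
    (hmB₁' : Measurable B₁') (hmB₂' : Measurable B₂')
    (hvA₁ : ∀ ω, A₁ ω = 1 ∨ A₁ ω = -1) (hvA₂ : ∀ ω, A₂ ω = 1 ∨ A₂ ω = -1)
    (hvA₃ : ∀ ω, A₃ ω = 1 ∨ A₃ ω = -1)
    (hvB₁ : ∀ ω, B₁ ω = 1 ∨ B₁ ω = -1) (hvB₂ : ∀ ω, B₂ ω = 1 ∨ B₂ ω = -1)
    (hvB₁' : ∀ ω, B₁' ω = 1 ∨ B₁' ω = -1) (hvB₂' : ∀ ω, B₂' ω = 1 ∨ B₂' ω = -1) :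
    (∫ ω, A₁ ω * B₁ ω ∂μ) + (∫ ω, A₂ ω * B₂ ω ∂μ)
      + (∫ ω, A₃ ω * (B₁ ω * B₂ ω) ∂μ)
      + (∫ ω, A₁ ω * B₁' ω ∂μ) + (∫ ω, A₂ ω * B₂' ω ∂μ)
      - (∫ ω, A₃ ω * (B₁' ω * B₂' ω) ∂μ) ≤ 4 := by
  have abs1 : ∀ (f : Ω → ℝ), (∀ ω, f ω = 1 ∨ f ω = -1) → ∀ ω, |f ω| ≤ 1 := by
    intro f hf ω; rcases hf ω with h | h <;> simp [h]
  have mul_abs : ∀ (f g : Ω → ℝ), (∀ ω, |f ω| ≤ 1) → (∀ ω, |g ω| ≤ 1) →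
      ∀ ω, |f ω * g ω| ≤ 1 := by
    intro f g hf hg ω
    rw [abs_mul]
    calc |f ω| * |g ω| ≤ 1 * 1 := by
          exact mul_le_mul (hf ω) (hg ω) (abs_nonneg _) zero_le_one
      _ = 1 := by ring
  have i1 : Integrable (fun ω => A₁ ω * B₁ ω) μ :=
    bell_integrable μ _ (hmA₁.mul hmB₁)
      (mul_abs _ _ (abs1 _ hvA₁) (abs1 _ hvB₁))
  have i2 : Integrable (fun ω => A₂ ω * B₂ ω) μ :=
    bell_integrable μ _ (hmA₂.mul hmB₂)
      (mul_abs _ _ (abs1 _ hvA₂) (abs1 _ hvB₂))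
  have i3 : Integrable (fun ω => A₃ ω * (B₁ ω * B₂ ω)) μ :=
    bell_integrable μ _ (hmA₃.mul (hmB₁.mul hmB₂))
      (mul_abs _ _ (abs1 _ hvA₃) (mul_abs _ _ (abs1 _ hvB₁) (abs1 _ hvB₂)))
  have i4 : Integrable (fun ω => A₁ ω * B₁' ω) μ :=
    bell_integrable μ _ (hmA₁.mul hmB₁')
      (mul_abs _ _ (abs1 _ hvA₁) (abs1 _ hvB₁'))
  have i5 : Integrable (fun ω => A₂ ω * B₂' ω) μ :=
    bell_integrable μ _ (hmA₂.mul hmB₂')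
      (mul_abs _ _ (abs1 _ hvA₂) (abs1 _ hvB₂'))
  have i6 : Integrable (fun ω => A₃ ω * (B₁' ω * B₂' ω)) μ :=
    bell_integrable μ _ (hmA₃.mul (hmB₁'.mul hmB₂'))
      (mul_abs _ _ (abs1 _ hvA₃) (mul_abs _ _ (abs1 _ hvB₁') (abs1 _ hvB₂')))
  have key : (∫ ω, (A₁ ω * B₁ ω + A₂ ω * B₂ ω + A₃ ω * (B₁ ω * B₂ ω)
      + A₁ ω * B₁' ω + A₂ ω * B₂' ω - A₃ ω * (B₁' ω * B₂' ω)) ∂μ) ≤ 4 := by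
    calc _ ≤ ∫ _ω, (4 : ℝ) ∂μ := by
          apply integral_mono
          · exact ((((i1.add i2).add i3).add i4).add i5).sub i6
          · exact integrable_const 4
          · intro ω
            exact bell_pt (A₁ ω) (A₂ ω) (A₃ ω) (B₁ ω) (B₂ ω) (B₁' ω) (B₂' ω)
              (hvA₁ ω) (hvA₂ ω) (hvA₃ ω) (hvB₁ ω) (hvB₂ ω) (hvB₁' ω) (hvB₂' ω)
      _ = 4 := by simp
  rw [show (∫ ω, A₁ ω * B₁ ω ∂μ) + (∫ ω, A₂ ω * B₂ ω ∂μ)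
      + (∫ ω, A₃ ω * (B₁ ω * B₂ ω) ∂μ)
      + (∫ ω, A₁ ω * B₁' ω ∂μ) + (∫ ω, A₂ ω * B₂' ω ∂μ)
      - (∫ ω, A₃ ω * (B₁' ω * B₂' ω) ∂μ)
      = ∫ ω, (A₁ ω * B₁ ω + A₂ ω * B₂ ω + A₃ ω * (B₁ ω * B₂ ω)
        + A₁ ω * B₁' ω + A₂ ω * B₂' ω - A₃ ω * (B₁' ω * B₂' ω)) ∂μ from by
    rw [integral_sub (by exact (((i1.add i2).add i3).add i4).add i5) i6,
        integral_add (by exact ((i1.add i2).add i3).add i4) i5,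
        integral_add (by exact (i1.add i2).add i3) i4,
        integral_add (by exact i1.add i2) i3, integral_add i1 i2]]
  exact key
end
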